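/- arXiv:1508.02280 — 2 statements merged into one kernel-verified Lean document; each statement's English description precedes it below -/
import Mathlib

section
/- For all real numbers a, c with a ≥ 1 and c > a, setting Q(a,c) = (cosh(a)·cosh(c) + 1)/(sinh(a)·sinh(c)), b = arcosh(Q(a,c)), and d = arcosh(sinh(b)·sinh(c)), one has the explicit lower bound d ≥ log(√2/4) + c − a. -/
/-- The inverse hyperbolic cosine, for `x ≥ 1`. -/
noncomputable def arcosh (x : ℝ) : ℝ := Real.log (x + Real.sqrt (x ^ 2 - 1))

/-!
Since `sinh b ^ 2 = Q(a, c) ^ 2 - 1`, the identity `cosh² = sinh² + 1` turns `sinh b * sinh c`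
into exactly `(cosh a + cosh c) / sinh a`. As `2 sinh a ≤ exp a` and `exp c ≤ 2 cosh c`, this is
at least `exp (c - a)`, so `d = arcosh (sinh b * sinh c) ≥ log (sinh b * sinh c) ≥ c - a`, which is
even better than the claimed bound because `log (√2 / 4) ≤ 0`.
-/

open Real hiding arcosh

lemma arcosh_eq_real_arcosh (x : ℝ) : arcosh x = Real.arcosh x := rfl

lemma log_le_arcosh {x : ℝ} (hx : 1 ≤ x) : log x ≤ arcosh x :=
  log_le_log (by linarith) (le_add_of_nonneg_right (sqrt_nonneg _))

noncomputable def pentagonQ (a c : ℝ) : ℝ := (cosh a * cosh c + 1) / (sinh a * sinh c)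

section Pentagon

variable {a c : ℝ}

lemma one_le_pentagonQ (ha : 0 < a) (hc : 0 < c) : 1 ≤ pentagonQ a c := by
  have hac : 0 < sinh a * sinh c := mul_pos (sinh_pos_iff.2 ha) (sinh_pos_iff.2 hc)
  rw [pentagonQ, one_le_div hac]
  nlinarith [cosh_sub a c, one_le_cosh (a - c)]

lemma pentagonQ_sq_sub_one_mul_sinh_sq (ha : 0 < a) (hc : 0 < c) :
    (pentagonQ a c ^ 2 - 1) * sinh c ^ 2 = ((cosh a + cosh c) / sinh a) ^ 2 := by
  have hsa : sinh a ≠ 0 := (sinh_pos_iff.2 ha).ne'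
  have hsc : sinh c ≠ 0 := (sinh_pos_iff.2 hc).ne'
  rw [pentagonQ]
  field_simp
  linear_combination (cosh c ^ 2 - 1) * cosh_sq a + sinh a ^ 2 * cosh_sq c

lemma sinh_arcosh_pentagonQ_mul_sinh (ha : 0 < a) (hc : 0 < c) :
    sinh (arcosh (pentagonQ a c)) * sinh c = (cosh a + cosh c) / sinh a := by
  have hsa : 0 < sinh a := sinh_pos_iff.2 ha
  have hsc : 0 < sinh c := sinh_pos_iff.2 hc
  rw [arcosh_eq_real_arcosh, sinh_arcosh (one_le_pentagonQ ha hc), ← sqrt_sq hsc.le,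
    ← sqrt_mul' _ (sq_nonneg _), pentagonQ_sq_sub_one_mul_sinh_sq ha hc, sqrt_sq (by positivity)]

end Pentagon

lemma exp_sub_le_cosh_add_cosh_div_sinh {a : ℝ} (ha : 0 < a) (c : ℝ) :
    exp (c - a) ≤ (cosh a + cosh c) / sinh a := by
  have hsa : 2 * sinh a ≤ exp a := by linarith [sinh_add_cosh a, sinh_lt_cosh a]
  have hec : exp c ≤ 2 * cosh c := by linarith [sinh_add_cosh c, sinh_lt_cosh c]
  rw [le_div_iff₀ (sinh_pos_iff.2 ha)]
  calc exp (c - a) * sinh a ≤ exp (c - a) * exp a / 2 := by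
        rw [mul_div_assoc]; gcongr; linarith
    _ = exp c / 2 := by rw [← exp_add, sub_add_cancel]
    _ ≤ cosh a + cosh c := by linarith [cosh_pos a]

lemma log_sqrt_two_div_four_nonpos : log (√2 / 4) ≤ 0 :=
  log_nonpos (by positivity) (by rw [div_le_one (by norm_num), sqrt_le_left] <;> norm_num)

/-- Explicit lower bound in the proof of the pentagon lemma (Lemma 8.1):
`d ≥ log (√2 / 4) + c - a`. -/
theorem pentagon_lemma_explicit_lower_bound (a c : ℝ) (ha : 1 ≤ a) (hc : a < c) :
    let Q := (Real.cosh a * Real.cosh c + 1) / (Real.sinh a * Real.sinh c)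
    let b := arcosh Q
    let d := arcosh (Real.sinh b * Real.sinh c)
    Real.log (Real.sqrt 2 / 4) + c - a ≤ d := by
  intro Q b d
  have ha₀ : 0 < a := by linarith
  have hS : sinh b * sinh c = (cosh a + cosh c) / sinh a :=
    sinh_arcosh_pentagonQ_mul_sinh ha₀ (by linarith)
  have hexp : exp (c - a) ≤ sinh b * sinh c := hS ▸ exp_sub_le_cosh_add_cosh_div_sinh ha₀ c
  calc log (√2 / 4) + c - a ≤ c - a := by linarith [log_sqrt_two_div_four_nonpos]
    _ ≤ log (sinh b * sinh c) := (le_log_iff_exp_le ((exp_pos _).trans_le hexp)).2 hexp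
    _ ≤ d := log_le_arcosh ((one_le_exp (by linarith)).trans hexp)
end

section
/- There exists a constant C′ > 0 such that for all real numbers a, c with a ≥ 1 and c > a, setting Q(a,c) = (cosh(a)·cosh(c) + 1)/(sinh(a)·sinh(c)), one has √2·e^{−a} ≤ √(Q(a,c)² − 1) ≤ C′·e^{−a}. -/
/-!
Since `(cosh a cosh c + 1)² - (sinh a sinh c)² = (cosh a + cosh c)²`, the square root equals
`(cosh a + cosh c) / (sinh a sinh c)` exactly. For `1 ≤ a ≤ c` every hyperbolic function in this
quotient is comparable to the exponential, so the quotient is comparable to `e^c / (e^a e^c) = e^{-a}`.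
-/

namespace Real

theorem cosh_mul_cosh_add_one_sq_sub_sinh_mul_sinh_sq (a c : ℝ) :
    (cosh a * cosh c + 1) ^ 2 - (sinh a * sinh c) ^ 2 = (cosh a + cosh c) ^ 2 := by
  linear_combination (cosh a ^ 2 - 1) * cosh_sq c + sinh c ^ 2 * cosh_sq a

theorem sqrt_cosh_mul_cosh_add_one_div_sq_sub_one {a c : ℝ} (ha : 0 < a) (hc : 0 < c) :
    √(((cosh a * cosh c + 1) / (sinh a * sinh c)) ^ 2 - 1)
      = (cosh a + cosh c) / (sinh a * sinh c) := by
  have hs : 0 < sinh a * sinh c := mul_pos (sinh_pos_iff.2 ha) (sinh_pos_iff.2 hc)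
  rw [← sqrt_sq (by positivity : 0 ≤ (cosh a + cosh c) / (sinh a * sinh c)), div_pow, div_pow,
    ← cosh_mul_cosh_add_one_sq_sub_sinh_mul_sinh_sq, sub_div, div_self (by positivity)]

theorem two_mul_exp_neg_mul_sinh_le_one (x : ℝ) : 2 * exp (-x) * sinh x ≤ 1 := by
  have h : 2 * exp (-x) * sinh x = 1 - exp (-x) ^ 2 := by
    rw [sinh_eq, exp_neg]
    field_simp
  rw [h]
  linarith [sq_nonneg (exp (-x))]

theorem exp_div_three_le_sinh {x : ℝ} (hx : 1 ≤ x) : exp x / 3 ≤ sinh x := by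
  have h : 3 * exp (-x) ≤ exp x :=
    calc 3 * exp (-x) ≤ exp (x + x) * exp (-x) := by gcongr; linarith [add_one_le_exp (x + x)]
      _ = exp x := by rw [← exp_add]; ring_nf
  rw [sinh_eq]
  linarith

theorem cosh_le_exp {x : ℝ} (hx : 0 ≤ x) : cosh x ≤ exp x := by
  linarith [cosh_add_sinh x, sinh_nonneg_iff.2 hx]

theorem two_mul_exp_neg_le_cosh_add_cosh_div {a c : ℝ} (ha : 0 < a) (hc : 0 < c) :
    2 * exp (-a) ≤ (cosh a + cosh c) / (sinh a * sinh c) := by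
  have hsc : 0 < sinh c := sinh_pos_iff.2 hc
  rw [le_div_iff₀ (mul_pos (sinh_pos_iff.2 ha) hsc)]
  calc 2 * exp (-a) * (sinh a * sinh c) = 2 * exp (-a) * sinh a * sinh c := by ring
    _ ≤ 1 * sinh c := by gcongr; exact two_mul_exp_neg_mul_sinh_le_one a
    _ ≤ cosh a + cosh c := by linarith [sinh_lt_cosh c, cosh_pos a]

theorem cosh_add_cosh_div_le_eighteen_mul_exp_neg {a c : ℝ} (ha : 1 ≤ a) (hac : a ≤ c) :
    (cosh a + cosh c) / (sinh a * sinh c) ≤ 18 * exp (-a) := by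
  have ha0 : 0 ≤ a := zero_le_one.trans ha
  have hsa := exp_div_three_le_sinh ha
  have hsc := exp_div_three_le_sinh (ha.trans hac)
  rw [div_le_iff₀ (mul_pos ((by positivity : (0 : ℝ) < exp a / 3).trans_le hsa)
    ((by positivity : (0 : ℝ) < exp c / 3).trans_le hsc))]
  calc cosh a + cosh c ≤ exp c + exp c :=
        add_le_add ((cosh_le_exp ha0).trans (exp_le_exp.2 hac)) (cosh_le_exp (ha0.trans hac))
    _ = 18 * exp (-a) * (exp a / 3 * (exp c / 3)) := by
        rw [exp_neg]
        field_simp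
        ring
    _ ≤ 18 * exp (-a) * (sinh a * sinh c) := by
        gcongr

end Real

/-- Intermediate estimate in the proof of the pentagon lemma (Lemma 8.1):
`√2 e^{-a} ≤ sinh b = √(Q(a,c)² - 1) ≤ C' e^{-a}`. -/
theorem pentagon_sinh_estimate :
    ∃ C' : ℝ, 0 < C' ∧ ∀ a c : ℝ, 1 ≤ a → a < c →
      let Q := (Real.cosh a * Real.cosh c + 1) / (Real.sinh a * Real.sinh c)
      Real.sqrt 2 * Real.exp (-a) ≤ Real.sqrt (Q ^ 2 - 1) ∧
        Real.sqrt (Q ^ 2 - 1) ≤ C' * Real.exp (-a) := by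
  refine ⟨18, by norm_num, fun a c ha hac => ?_⟩
  have ha0 : 0 < a := one_pos.trans_le ha
  dsimp only
  rw [Real.sqrt_cosh_mul_cosh_add_one_div_sq_sub_one ha0 (ha0.trans hac)]
  refine ⟨le_trans ?_ (Real.two_mul_exp_neg_le_cosh_add_cosh_div ha0 (ha0.trans hac)),
    Real.cosh_add_cosh_div_le_eighteen_mul_exp_neg ha hac.le⟩
  gcongr
  linarith [Real.sqrt_two_lt_three_halves]
end
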